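/- Let n ≥ 1 and k be integers with 2n + 1 ≤ k. Every k-peg Hanoi group generated by a set S with 1 ∈ S ⊆ R̲_{k,n} is contracting. -/

import Mathlib

/-!
Common framework: automorphisms of the rooted tree `X_k^*`, root permutations,
sections, self-similar and contracting groups, Hanoi automorphisms and Hanoi
groups, following Makisumi–Stadnyk–Steinhurst, "Modified Hanoi Towers Groups
and Limit Spaces".

A word `x_n … x_1` over the alphabet `X_k = Fin k` is encoded as the list
`[x_n, …, x_1]`, whose head `x_n` is the first letter, i.e. the letter that a
tree automorphism reads (and permutes) first.
-/

namespace Hanoi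

/-- Words over the alphabet `X_k = Fin k`. -/
abbrev Word (k : ℕ) := List (Fin k)

/-- `e` is an automorphism of the rooted tree `X_k^*`: it fixes the root
(the empty word), preserves word length (levels) and preserves the tree
structure (words sharing an initial segment of length `n` are sent to words
sharing an initial segment of length `n`). -/
def IsTreeAut {k : ℕ} (e : Equiv.Perm (Word k)) : Prop :=
  (∀ w : Word k, (e w).length = w.length) ∧
    ∀ (w v : Word k) (n : ℕ), w.take n = v.take n → (e w).take n = (e v).take n

open Classical in
/-- The root permutation `σ_e` of a tree automorphism `e` (its action on
one-letter words). -/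
noncomputable def rootPerm {k : ℕ} (e : Equiv.Perm (Word k)) : Equiv.Perm (Fin k) :=
  if h : Function.Bijective (fun x : Fin k => ((e [x]).head?.getD x)) then
    Equiv.ofBijective _ h
  else 1

open Classical in
/-- The section `e|_x` of `e` at a letter `x`: the unique automorphism with
`e (x :: w) = σ_e x :: (e|_x) w` for all words `w`. -/
noncomputable def sec {k : ℕ} (e : Equiv.Perm (Word k)) (x : Fin k) : Equiv.Perm (Word k) :=
  if h : Function.Bijective (fun w : Word k => (e (x :: w)).tail) then
    Equiv.ofBijective _ h
  else 1

/-- The section `e|_v` of `e` at a word `v = x_n … x_1`, defined by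
`e|_v = (e|_{x_n})|_{x_{n-1} … x_1}`. -/
noncomputable def secW {k : ℕ} (e : Equiv.Perm (Word k)) : Word k → Equiv.Perm (Word k)
  | [] => e
  | x :: v => secW (sec e x) v

/-- A subgroup of the permutations of `X_k^*` is self-similar if it consists of
tree automorphisms and is closed under taking sections. -/
def IsSelfSimilar {k : ℕ} (G : Subgroup (Equiv.Perm (Word k))) : Prop :=
  (∀ g ∈ G, IsTreeAut g) ∧ ∀ g ∈ G, ∀ x : Fin k, sec g x ∈ G

/-- A self-similar group `G` is contracting if there is a finite subset `N ⊆ G`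
such that for every `g ∈ G` all sections of `g` at words of length at least
some `m` lie in `N`. -/
def IsContracting {k : ℕ} (G : Subgroup (Equiv.Perm (Word k))) : Prop :=
  ∃ N : Set (Equiv.Perm (Word k)), N.Finite ∧ N ⊆ (G : Set (Equiv.Perm (Word k))) ∧
    ∀ g ∈ G, ∃ m : ℕ, ∀ v : Word k, m ≤ v.length → secW g v ∈ N

/-- `N` is the nucleus of `G`: a smallest finite subset of `G` catching all
deep enough sections of every element of `G`. -/
def IsNucleus {k : ℕ} (G : Subgroup (Equiv.Perm (Word k)))
    (N : Set (Equiv.Perm (Word k))) : Prop :=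
  (N.Finite ∧ N ⊆ (G : Set (Equiv.Perm (Word k))) ∧
    ∀ g ∈ G, ∃ m : ℕ, ∀ v : Word k, m ≤ v.length → secW g v ∈ N) ∧
  ∀ N' : Set (Equiv.Perm (Word k)), N'.Finite → N' ⊆ (G : Set (Equiv.Perm (Word k))) →
    (∀ g ∈ G, ∃ m : ℕ, ∀ v : Word k, m ≤ v.length → secW g v ∈ N') → N ⊆ N'

/-- `a` is a Hanoi automorphism with set of inactive pegs `Q`: the section at
each active peg (element of the complement of `Q`) is trivial, the section at
each inactive peg is `a` itself, and the root permutation fixes each inactive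
peg. -/
def IsHanoiWith {k : ℕ} (a : Equiv.Perm (Word k)) (Q : Set (Fin k)) : Prop :=
  IsTreeAut a ∧ (∀ i ∉ Q, sec a i = 1) ∧ (∀ j ∈ Q, sec a j = a) ∧
    ∀ j ∈ Q, rootPerm a j = j

/-- `a` is a `k`-peg Hanoi automorphism. -/
def IsHanoiAut {k : ℕ} (a : Equiv.Perm (Word k)) : Prop := ∃ Q, IsHanoiWith a Q

open Classical in
/-- The set `Q_a` of inactive pegs of a Hanoi automorphism `a`; by convention
`Q_1 = X_k` (for `a ≠ 1` the set of inactive pegs is uniquely determined). -/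
noncomputable def inactivePegs {k : ℕ} (a : Equiv.Perm (Word k)) : Set (Fin k) :=
  if a = 1 then Set.univ
  else if h : ∃ Q, IsHanoiWith a Q then h.choose else ∅

/-- `S_{k,q}`: the set of Hanoi automorphisms over `X_k` with exactly `q`
inactive pegs. -/
noncomputable def hanoiSet (k q : ℕ) : Set (Equiv.Perm (Word k)) :=
  {a | IsHanoiAut a ∧ (inactivePegs a).ncard = q}

/-- `L = [s_n, …, s_1]` is a representation of `g` over the generating set `S`:
each `s_i ∈ S ∪ S⁻¹` and `g = s_n ⋯ s_2 s_1`. -/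
def IsRepOf {k : ℕ} (S : Set (Equiv.Perm (Word k))) (L : List (Equiv.Perm (Word k)))
    (g : Equiv.Perm (Word k)) : Prop :=
  (∀ s ∈ L, s ∈ S ∨ s⁻¹ ∈ S) ∧ L.prod = g

/-- The length `l(g)` of `g` with respect to `S`: the length of a minimal
representation (`0` for the identity). -/
noncomputable def repLength {k : ℕ} (S : Set (Equiv.Perm (Word k)))
    (g : Equiv.Perm (Word k)) : ℕ :=
  sInf {n | ∃ L, IsRepOf S L g ∧ L.length = n}

/-- The essential set of a representation: the intersection of the sets of
inactive pegs of its letters. -/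
noncomputable def essSet {k : ℕ} (L : List (Equiv.Perm (Word k))) : Set (Fin k) :=
  ⋂ s ∈ L, inactivePegs s

/-- The prenucleus of `G`: the set of elements `g ∈ G` with `g|_j = g` for some
letter `j`. -/
noncomputable def preNucleus {k : ℕ} (G : Subgroup (Equiv.Perm (Word k))) :
    Set (Equiv.Perm (Word k)) :=
  {g | g ∈ G ∧ ∃ j : Fin k, sec g j = g}

/-- The underlying function of the Hanoi Towers move `a_{ij}`: it changes the
first occurrence of `i` or `j` in a word by means of the transposition `(i j)`
and leaves the rest of the word unchanged. -/
def hanoiMoveFun {k : ℕ} (i j : Fin k) : Word k → Word k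
  | [] => []
  | x :: w => if x = i ∨ x = j then Equiv.swap i j x :: w else x :: hanoiMoveFun i j w

theorem hanoiMoveFun_involutive {k : ℕ} (i j : Fin k) :
    Function.Involutive (hanoiMoveFun i j) := by
  intro w
  induction w with
  | nil => rfl
  | cons x t ih =>
    by_cases h : x = i ∨ x = j
    · have h2 : Equiv.swap i j x = i ∨ Equiv.swap i j x = j := by
        rcases h with h | h <;> subst h <;> simp
      simp only [hanoiMoveFun, if_pos h, if_pos h2, Equiv.swap_apply_self]
    · simp only [hanoiMoveFun, if_neg h, ih]

/-- The Hanoi Towers move `a_{ij}`, as a permutation of `X_k^*`: its root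
permutation is the transposition `(i j)`, its sections at `i` and `j` are
trivial and all its other sections equal `a_{ij}` itself. -/
def hanoiMove {k : ℕ} (i j : Fin k) : Equiv.Perm (Word k) :=
  (hanoiMoveFun_involutive i j).toPerm

/-- The orbit of the letter `j` under the subgroup of `Sym(X_k)` generated by
the root permutations of the elements of `T`. -/
noncomputable def orbT {k : ℕ} (T : Finset (Equiv.Perm (Word k))) (j : Fin k) : Set (Fin k) :=
  MulAction.orbit (Subgroup.closure ((fun a => rootPerm a) '' (T : Set (Equiv.Perm (Word k))))) j

/-- The set `Fix(T)` of letters fixed by the root permutation of every element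
of `T`. -/
noncomputable def fixT {k : ℕ} (T : Finset (Equiv.Perm (Word k))) : Set (Fin k) :=
  {x | ∀ s ∈ T, rootPerm s x = x}

/-- Condition (*) on a generating set `S` of Hanoi automorphisms: for every
finite `T ⊆ S` with nonempty essential set and every letter `j ∉ Fix(T)`,
the orbit of `j` misses the inactive pegs of some element of `T`. -/
noncomputable def CondStar {k : ℕ} (S : Set (Equiv.Perm (Word k))) : Prop :=
  ∀ T : Finset (Equiv.Perm (Word k)), (T : Set (Equiv.Perm (Word k))) ⊆ S →
    (⋂ s ∈ T, inactivePegs s).Nonempty →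
    ∀ j : Fin k, j ∉ fixT T →
      ∃ s ∈ T, orbT T j ∩ inactivePegs s = ∅

open Classical in
/-- `d(g)`: the least number of distinct generators occurring among all
representations of `g` having nonempty essential set. -/
noncomputable def dCount {k : ℕ} (S : Set (Equiv.Perm (Word k)))
    (g : Equiv.Perm (Word k)) : ℕ :=
  sInf {M | ∃ L, IsRepOf S L g ∧ (essSet L).Nonempty ∧ L.toFinset.card = M}

/-- `S` is fully symmetric: for every non-identity `a ∈ S` and every
`φ ∈ Sym(X_k)`, the Hanoi automorphism `φ·a` with inactive pegs `φ(Q_a)` and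
root permutation `φ ∘ σ_a ∘ φ⁻¹` again lies in `S`. -/
noncomputable def FullySymmetric {k : ℕ} (S : Set (Equiv.Perm (Word k))) : Prop :=
  ∀ a ∈ S, a ≠ 1 → ∀ φ : Equiv.Perm (Fin k), ∀ b : Equiv.Perm (Word k),
    IsHanoiWith b (φ '' inactivePegs a) →
    rootPerm b = φ * rootPerm a * φ⁻¹ → b ∈ S

/-- The family `R̲_{k,n}`: the identity together with all Hanoi automorphisms
`a` such that (1) `Q_a ⊆ {m+1, …, m+n}` for some `m`, and (2) whenever
`i ∈ Q_a` the root permutation of `a` fixes `i-1, …, i-(n-1)`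
(all peg labels mod `k`). -/
noncomputable def Runder (k n : ℕ) : Set (Equiv.Perm (Word k)) :=
  {a | a = 1 ∨ (IsHanoiAut a ∧
    (∃ m : Fin k, ∀ q ∈ inactivePegs a, ∃ t : ℕ, 1 ≤ t ∧ t ≤ n ∧
      (q : ℕ) = ((m : ℕ) + t) % k) ∧
    ∀ i ∈ inactivePegs a, ∀ x : Fin k, ∀ t : ℕ, 1 ≤ t → t ≤ n - 1 →
      ((x : ℕ) + t) % k = (i : ℕ) → rootPerm a x = x)}

/-- The family `R̄_{k,n}`: the identity together with all Hanoi automorphisms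
`a` such that (1) `Q_a ⊆ {m+1, …, m+n}` for some `m`, and (2) whenever
`i ∈ Q_a` the root permutation of `a` fixes `i+1, …, i+(n-1)`
(all peg labels mod `k`). -/
noncomputable def Rover (k n : ℕ) : Set (Equiv.Perm (Word k)) :=
  {a | a = 1 ∨ (IsHanoiAut a ∧
    (∃ m : Fin k, ∀ q ∈ inactivePegs a, ∃ t : ℕ, 1 ≤ t ∧ t ≤ n ∧
      (q : ℕ) = ((m : ℕ) + t) % k) ∧
    ∀ i ∈ inactivePegs a, ∀ x : Fin k, ∀ t : ℕ, 1 ≤ t → t ≤ n - 1 →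
      (x : ℕ) = ((i : ℕ) + t) % k → rootPerm a x = x)}

/-- The finite word `x_m … x_1` (first letter `x_m`) read off from a
left-infinite sequence `… x_2 x_1`, encoded as `x : ℕ → Fin k` with
`x s = x_{s+1}`. -/
def wordOf {k : ℕ} (x : ℕ → Fin k) (m : ℕ) : Word k := (List.range m).reverse.map x

/-!
Write an element of the group as a product `L` of generators and their inverses, all lying in
`R̲_{k,n}`. At a letter `x` that is an inactive peg of every factor, the element lies in the
monoid generated by the factors inactive at `x`, which is closed under sections; otherwise some
factor is active at `x` and the section at `x` is a product with fewer factors. Hence the sections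
at words longer than `L` lie in the union over `j` of the monoids `M_j` generated by the
generators with inactive peg `j`.

Each `M_j` is finite, by induction on the number of generators: an element of `M_j` is determined
by its root permutation and its sections at the letters where some generator is active, and each
such section lies in a monoid with fewer generators. At a letter fixed by all root permutations
drop the generators active there; at a moved letter drop a generator all of whose inactive pegs
are fixed by every root permutation. Such a generator exists because the inactive pegs of each
generator lie in a window of `n` consecutive pegs containing `j`, while the root permutation
fixes the `n - 1` pegs below each inactive peg.
-/

section TreeAut

variable {k : ℕ}

theorem isTreeAut_one : IsTreeAut (1 : Equiv.Perm (Word k)) :=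
  ⟨fun _ => rfl, fun _ _ _ h => h⟩

theorem IsTreeAut.mul {e f : Equiv.Perm (Word k)} (he : IsTreeAut e) (hf : IsTreeAut f) :
    IsTreeAut (e * f) :=
  ⟨fun w => by rw [Equiv.Perm.mul_apply, he.1, hf.1],
    fun w v n h => he.2 _ _ _ (hf.2 _ _ _ h)⟩

theorem IsTreeAut.apply_take {e : Equiv.Perm (Word k)} (he : IsTreeAut e) (w : Word k) (n : ℕ) :
    (e w).take n = e (w.take n) := by
  rw [he.2 w (w.take n) n (by rw [List.take_take, min_self])]
  exact List.take_of_length_le (by rw [he.1, List.length_take]; omega)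

theorem isTreeAut_of_apply_take {e : Equiv.Perm (Word k)} (hlen : ∀ w, (e w).length = w.length)
    (htake : ∀ w n, (e w).take n = e (w.take n)) : IsTreeAut e :=
  ⟨hlen, fun w v n h => by rw [htake, htake, h]⟩

theorem IsTreeAut.inv {e : Equiv.Perm (Word k)} (he : IsTreeAut e) : IsTreeAut e⁻¹ := by
  refine isTreeAut_of_apply_take (fun w => ?_) (fun w n => e.injective ?_)
  · simpa using (he.1 (e⁻¹ w)).symm
  · simp [← he.apply_take]

theorem IsTreeAut.apply_singleton {e : Equiv.Perm (Word k)} (he : IsTreeAut e) (x : Fin k) :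
    e [x] = [rootPerm e x] := by
  have hsingle : ∀ y : Fin k, e [y] = [(e [y]).head?.getD y] := fun y => by
    obtain ⟨c, hc⟩ := List.length_eq_one_iff.mp (he.1 [y])
    rw [hc]; rfl
  have hbij : Function.Bijective fun y : Fin k => (e [y]).head?.getD y :=
    Finite.injective_iff_bijective.mp fun y z h =>
      List.singleton_injective (e.injective (by rw [hsingle y, hsingle z, h]))
  rw [rootPerm, dif_pos hbij]
  exact hsingle x

theorem IsTreeAut.apply_cons_eq_cons_tail {e : Equiv.Perm (Word k)} (he : IsTreeAut e)
    (x : Fin k) (w : Word k) : e (x :: w) = rootPerm e x :: (e (x :: w)).tail := by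
  have h := he.apply_take (x :: w) 1
  rw [List.take_succ_cons, List.take_zero, he.apply_singleton] at h
  cases hw : e (x :: w) <;> simp_all

theorem IsTreeAut.apply_cons {e : Equiv.Perm (Word k)} (he : IsTreeAut e) (x : Fin k)
    (w : Word k) : e (x :: w) = rootPerm e x :: sec e x w := by
  have hbij : Function.Bijective fun w : Word k => (e (x :: w)).tail := by
    refine ⟨fun w v h => ?_, fun u => ?_⟩
    · have : e (x :: w) = e (x :: v) := by
        rw [he.apply_cons_eq_cons_tail, he.apply_cons_eq_cons_tail x v]; exact congrArg _ h
      simpa using this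
    · have hx : (e⁻¹ (rootPerm e x :: u)).take 1 = [x] := by
        rw [he.inv.apply_take, List.take_succ_cons, List.take_zero, ← he.apply_singleton]
        simp
      refine ⟨(e⁻¹ (rootPerm e x :: u)).tail, ?_⟩
      have hcons : x :: (e⁻¹ (rootPerm e x :: u)).tail = e⁻¹ (rootPerm e x :: u) := by
        cases hw : e⁻¹ (rootPerm e x :: u) <;> simp_all
      show (e (x :: _)).tail = u
      rw [hcons]; simp
  rw [sec, dif_pos hbij]
  exact he.apply_cons_eq_cons_tail x w

theorem rootPerm_one : rootPerm (1 : Equiv.Perm (Word k)) = 1 :=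
  Equiv.ext fun x => by simpa using (isTreeAut_one.apply_singleton x).symm

theorem sec_one (x : Fin k) : sec (1 : Equiv.Perm (Word k)) x = 1 :=
  Equiv.ext fun w => by simpa [rootPerm_one] using (isTreeAut_one.apply_cons x w).symm

theorem rootPerm_mul {e f : Equiv.Perm (Word k)} (he : IsTreeAut e) (hf : IsTreeAut f)
    (x : Fin k) : rootPerm (e * f) x = rootPerm e (rootPerm f x) := by
  have h := (he.mul hf).apply_singleton x
  rw [Equiv.Perm.mul_apply, hf.apply_singleton, he.apply_singleton] at h
  simpa using h.symm

theorem sec_mul {e f : Equiv.Perm (Word k)} (he : IsTreeAut e) (hf : IsTreeAut f) (x : Fin k) :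
    sec (e * f) x = sec e (rootPerm f x) * sec f x := by
  refine Equiv.ext fun w => ?_
  have h := (he.mul hf).apply_cons x w
  rw [Equiv.Perm.mul_apply, hf.apply_cons, he.apply_cons] at h
  exact (List.cons_eq_cons.mp h).2.symm

theorem rootPerm_inv {e : Equiv.Perm (Word k)} (he : IsTreeAut e) :
    rootPerm e⁻¹ = (rootPerm e)⁻¹ := by
  rw [eq_inv_iff_mul_eq_one]
  refine Equiv.ext fun x => ?_
  rw [Equiv.Perm.mul_apply, ← rootPerm_mul he.inv he, inv_mul_cancel, rootPerm_one]

theorem sec_inv {e : Equiv.Perm (Word k)} (he : IsTreeAut e) (x : Fin k) :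
    sec e⁻¹ (rootPerm e x) = (sec e x)⁻¹ := by
  rw [eq_inv_iff_mul_eq_one, ← sec_mul he.inv he, inv_mul_cancel, sec_one]

theorem IsTreeAut.eq_of_rootPerm_eq {e f : Equiv.Perm (Word k)} (he : IsTreeAut e)
    (hf : IsTreeAut f) (hroot : rootPerm e = rootPerm f)
    (hsec : ∀ x, sec e x = sec f x ∨ sec e x = e ∧ sec f x = f) : e = f := by
  refine Equiv.ext fun w => ?_
  induction w with
  | nil => rw [List.eq_nil_of_length_eq_zero (he.1 []), List.eq_nil_of_length_eq_zero (hf.1 [])]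
  | cons x w ih =>
    rw [he.apply_cons, hf.apply_cons, hroot]
    rcases hsec x with h | ⟨he', hf'⟩
    · rw [h]
    · rw [he', hf', ih]

end TreeAut

section HanoiAut

variable {k : ℕ}

theorem isHanoiWith_one : IsHanoiWith (1 : Equiv.Perm (Word k)) Set.univ :=
  ⟨isTreeAut_one, fun i hi => absurd (Set.mem_univ i) hi, fun j _ => sec_one j,
    fun j _ => by rw [rootPerm_one]; rfl⟩

theorem IsHanoiWith.inv {a : Equiv.Perm (Word k)} {Q : Set (Fin k)} (h : IsHanoiWith a Q) :
    IsHanoiWith a⁻¹ Q := by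
  obtain ⟨htree, hactive, hinactive, hfix⟩ := h
  have hQ : ∀ x, rootPerm a x ∈ Q ↔ x ∈ Q := fun x => by
    refine ⟨fun hx => ?_, fun hx => by rwa [hfix x hx]⟩
    rwa [← (rootPerm a).injective (hfix _ hx)]
  refine ⟨htree.inv, fun i hi => ?_, fun j hj => ?_, fun j hj => ?_⟩
  · obtain ⟨x, rfl⟩ := (rootPerm a).surjective i
    rw [sec_inv htree, hactive x ((hQ x).not.mp hi), inv_one]
  · rw [← hfix j hj, sec_inv htree, hinactive j hj]
  · rw [rootPerm_inv htree, Equiv.Perm.inv_eq_iff_eq, hfix j hj]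

theorem IsHanoiWith.eq_of_rootPerm_eq {a b : Equiv.Perm (Word k)} {Q : Set (Fin k)}
    (ha : IsHanoiWith a Q) (hb : IsHanoiWith b Q) (hroot : rootPerm a = rootPerm b) : a = b :=
  ha.1.eq_of_rootPerm_eq hb.1 hroot fun x => by
    by_cases hx : x ∈ Q
    · exact Or.inr ⟨ha.2.2.1 x hx, hb.2.2.1 x hx⟩
    · exact Or.inl (by rw [ha.2.1 x hx, hb.2.1 x hx])

theorem IsHanoiWith.inactive_eq {a : Equiv.Perm (Word k)} {Q Q' : Set (Fin k)}
    (h : IsHanoiWith a Q) (h' : IsHanoiWith a Q') (ha : a ≠ 1) : Q = Q' := by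
  ext q
  constructor <;> intro hq <;> by_contra hq' <;> apply ha
  · rw [← h.2.2.1 q hq, h'.2.1 q hq']
  · rw [← h'.2.2.1 q hq, h.2.1 q hq']

theorem IsHanoiAut.isHanoiWith {a : Equiv.Perm (Word k)} (h : IsHanoiAut a) :
    IsHanoiWith a (inactivePegs a) := by
  by_cases ha : a = 1
  · subst ha
    rw [inactivePegs, if_pos rfl]
    exact isHanoiWith_one
  · have h' : ∃ Q, IsHanoiWith a Q := h
    rw [inactivePegs, if_neg ha, dif_pos h']
    exact h'.choose_spec

theorem IsHanoiAut.inactivePegs_inv {a : Equiv.Perm (Word k)} (h : IsHanoiAut a) :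
    inactivePegs a⁻¹ = inactivePegs a := by
  by_cases ha : a = 1
  · rw [ha, inv_one]
  · have hinv : IsHanoiWith a⁻¹ (inactivePegs a) := h.isHanoiWith.inv
    exact (IsHanoiAut.isHanoiWith ⟨_, hinv⟩).inactive_eq hinv (inv_ne_one.mpr ha)

theorem finite_setOf_isHanoiAut : {a : Equiv.Perm (Word k) | IsHanoiAut a}.Finite := by
  refine Set.Finite.of_finite_image (f := fun a => (inactivePegs a, rootPerm a))
    (Set.toFinite _) fun a ha b hb hab => ?_
  obtain ⟨hQ, hroot⟩ := Prod.mk.inj hab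
  exact (hQ ▸ IsHanoiAut.isHanoiWith ha).eq_of_rootPerm_eq (IsHanoiAut.isHanoiWith hb) hroot

end HanoiAut

section Closure

variable {k : ℕ} {T : Set (Equiv.Perm (Word k))}

theorem isTreeAut_of_mem_closure (hT : ∀ s ∈ T, IsHanoiAut s) {g : Equiv.Perm (Word k)}
    (hg : g ∈ Submonoid.closure T) : IsTreeAut g := by
  induction hg using Submonoid.closure_induction with
  | mem s hs => exact (hT s hs).isHanoiWith.1
  | one => exact isTreeAut_one
  | mul g h _ _ hg hh => exact hg.mul hh

theorem mapsTo_rootPerm_of_mem_closure (hT : ∀ s ∈ T, IsHanoiAut s) {A : Set (Fin k)}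
    (hA : ∀ t ∈ T, Set.MapsTo (rootPerm t) A A) {g : Equiv.Perm (Word k)}
    (hg : g ∈ Submonoid.closure T) : Set.MapsTo (rootPerm g) A A := by
  induction hg using Submonoid.closure_induction with
  | mem s hs => exact hA s hs
  | one => rw [rootPerm_one]; exact Set.mapsTo_id A
  | mul g h hgT hhT hg hh =>
    intro x hx
    rw [rootPerm_mul (isTreeAut_of_mem_closure hT hgT) (isTreeAut_of_mem_closure hT hhT)]
    exact hg (hh hx)

theorem sec_mem_closure_of_mapsTo (hT : ∀ s ∈ T, IsHanoiAut s) {A : Set (Fin k)}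
    (hA : ∀ t ∈ T, Set.MapsTo (rootPerm t) A A) {g : Equiv.Perm (Word k)}
    (hg : g ∈ Submonoid.closure T) {x : Fin k} (hx : x ∈ A) :
    sec g x ∈ Submonoid.closure {t ∈ T | (A ∩ inactivePegs t).Nonempty} := by
  induction hg using Submonoid.closure_induction generalizing x with
  | mem s hs =>
    by_cases hxs : x ∈ inactivePegs s
    · rw [(hT s hs).isHanoiWith.2.2.1 x hxs]
      exact Submonoid.subset_closure ⟨hs, x, hx, hxs⟩
    · rw [(hT s hs).isHanoiWith.2.1 x hxs]
      exact one_mem _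
  | one => rw [sec_one]; exact one_mem _
  | mul g h hgT hhT hg hh =>
    rw [sec_mul (isTreeAut_of_mem_closure hT hgT) (isTreeAut_of_mem_closure hT hhT)]
    exact mul_mem (hg (mapsTo_rootPerm_of_mem_closure hT hA hhT hx)) (hh hx)

theorem secW_mem_closure (hT : ∀ s ∈ T, IsHanoiAut s) {g : Equiv.Perm (Word k)}
    (hg : g ∈ Submonoid.closure T) (v : Word k) : secW g v ∈ Submonoid.closure T := by
  induction v generalizing g with
  | nil => exact hg
  | cons x v ih =>
    have hsec := sec_mem_closure_of_mapsTo hT (fun _ _ => Set.mapsTo_univ _ _) hg (Set.mem_univ x)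
    exact ih (Submonoid.closure_mono (Set.sep_subset _ _) hsec)

theorem rootPerm_apply_eq_self_of_mem_closure (hT : ∀ s ∈ T, IsHanoiAut s) {x : Fin k}
    (hx : ∀ t ∈ T, x ∈ inactivePegs t) {g : Equiv.Perm (Word k)}
    (hg : g ∈ Submonoid.closure T) : rootPerm g x = x :=
  (mapsTo_rootPerm_of_mem_closure hT (A := {x})
    (fun t ht => Set.mapsTo_singleton.mpr ((hT t ht).isHanoiWith.2.2.2 x (hx t ht))) hg) rfl

theorem sec_eq_self_of_mem_closure (hT : ∀ s ∈ T, IsHanoiAut s) {x : Fin k}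
    (hx : ∀ t ∈ T, x ∈ inactivePegs t) {g : Equiv.Perm (Word k)}
    (hg : g ∈ Submonoid.closure T) : sec g x = g := by
  induction hg using Submonoid.closure_induction with
  | mem s hs => exact (hT s hs).isHanoiWith.2.2.1 x (hx s hs)
  | one => exact sec_one x
  | mul g h hgT hhT hg hh =>
    rw [sec_mul (isTreeAut_of_mem_closure hT hgT) (isTreeAut_of_mem_closure hT hhT),
      rootPerm_apply_eq_self_of_mem_closure hT hx hhT, hg, hh]

theorem finite_closure_of_finite_sec (hT : ∀ s ∈ T, IsHanoiAut s)
    (hsec : ∀ x, (∃ t ∈ T, x ∉ inactivePegs t) →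
      ((fun g => sec g x) '' Submonoid.closure T).Finite) :
    (Submonoid.closure T : Set (Equiv.Perm (Word k))).Finite := by
  let Φ : Equiv.Perm (Word k) →
      Equiv.Perm (Fin k) × ({x // ∃ t ∈ T, x ∉ inactivePegs t} → Equiv.Perm (Word k)) :=
    fun g => (rootPerm g, fun x => sec g x)
  refine Set.Finite.of_finite_image (f := Φ) ?_ fun g hg h hh hgh => ?_
  · refine (Set.finite_univ.prod
      (Set.Finite.pi (t := fun x => (fun g => sec g x.1) '' Submonoid.closure T)
        fun x => hsec x.1 x.2)).subset ?_
    rintro _ ⟨g, hg, rfl⟩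
    exact ⟨Set.mem_univ _, fun x _ => ⟨g, hg, rfl⟩⟩
  · obtain ⟨hroot, hsecs⟩ := Prod.mk.inj hgh
    refine (isTreeAut_of_mem_closure hT hg).eq_of_rootPerm_eq
      (isTreeAut_of_mem_closure hT hh) hroot fun x => ?_
    by_cases hx : ∃ t ∈ T, x ∉ inactivePegs t
    · exact Or.inl (congrFun hsecs ⟨x, hx⟩)
    · push Not at hx
      exact Or.inr ⟨sec_eq_self_of_mem_closure hT hx hg, sec_eq_self_of_mem_closure hT hx hh⟩

end Closure

section Words

variable {k : ℕ}

theorem exists_sublist_prod_eq_sec {L : List (Equiv.Perm (Word k))}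
    (hL : ∀ s ∈ L, IsHanoiAut s) {x : Fin k} (hx : ∃ s ∈ L, x ∉ inactivePegs s) :
    ∃ M : List (Equiv.Perm (Word k)),
      List.Sublist M L ∧ M.length < L.length ∧ M.prod = sec L.prod x := by
  induction L with
  | nil => simp at hx
  | cons s L ih =>
    have hL' : ∀ t ∈ {t | t ∈ L}, IsHanoiAut t := fun t ht => hL t (List.mem_cons_of_mem s ht)
    have hprod : L.prod ∈ Submonoid.closure {t | t ∈ L} :=
      list_prod_mem fun t ht => Submonoid.subset_closure ht
    have hs := (hL s List.mem_cons_self).isHanoiWith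
    rw [List.prod_cons, sec_mul hs.1 (isTreeAut_of_mem_closure hL' hprod)]
    by_cases hxL : ∃ t ∈ L, x ∉ inactivePegs t
    · obtain ⟨M, hML, hlen, hM⟩ := ih (fun t ht => hL t (List.mem_cons_of_mem s ht)) hxL
      by_cases hy : rootPerm L.prod x ∈ inactivePegs s
      · exact ⟨s :: M, hML.cons_cons s, by simpa using hlen,
          by rw [List.prod_cons, hM, hs.2.2.1 _ hy]⟩
      · exact ⟨M, hML.cons s, by simp only [List.length_cons]; omega, by rw [hs.2.1 _ hy, one_mul, hM]⟩
    · push Not at hxL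
      have hxs : x ∉ inactivePegs s := by
        obtain ⟨t, ht, hxt⟩ := hx
        rcases List.mem_cons.mp ht with rfl | ht
        · exact hxt
        · exact absurd (hxL t ht) hxt
      refine ⟨L, List.sublist_cons_self s L, by simp, ?_⟩
      rw [rootPerm_apply_eq_self_of_mem_closure hL' hxL hprod, hs.2.1 x hxs, one_mul,
        sec_eq_self_of_mem_closure hL' hxL hprod]

theorem secW_prod_mem_iUnion_closure {T : Set (Equiv.Perm (Word k))}
    (hT : ∀ s ∈ T, IsHanoiAut s) {L : List (Equiv.Perm (Word k))} (hL : ∀ s ∈ L, s ∈ T)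
    {v : Word k} (hv : L.length < v.length) :
    secW L.prod v ∈ ⋃ j, (Submonoid.closure {s ∈ T | j ∈ inactivePegs s} : Set _) := by
  induction v generalizing L with
  | nil => simp at hv
  | cons x v ih =>
    by_cases hx : ∀ s ∈ L, x ∈ inactivePegs s
    · refine Set.mem_iUnion.mpr ⟨x, secW_mem_closure (fun s hs => hT s hs.1) ?_ _⟩
      exact list_prod_mem fun s hs => Submonoid.subset_closure ⟨hL s hs, hx s hs⟩
    · push Not at hx
      obtain ⟨M, hML, hlen, hM⟩ := exists_sublist_prod_eq_sec (fun s hs => hT s (hL s hs)) hx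
      rw [secW, ← hM]
      exact ih (fun s hs => hL s (hML.subset hs)) (by simp only [List.length_cons] at hv; omega)

end Words

section Runder

variable {k n : ℕ}

theorem isHanoiAut_of_mem_Runder {a : Equiv.Perm (Word k)} (ha : a ∈ Runder k n) :
    IsHanoiAut a := by
  rcases ha with rfl | ⟨ha, -⟩
  · exact ⟨_, isHanoiWith_one⟩
  · exact ha

theorem inv_mem_Runder {a : Equiv.Perm (Word k)} (ha : a ∈ Runder k n) : a⁻¹ ∈ Runder k n := by
  rcases ha with rfl | ⟨ha, hwindow, hfix⟩
  · exact Or.inl inv_one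
  refine Or.inr ⟨⟨_, ha.isHanoiWith.inv⟩, ?_, ?_⟩ <;> rw [ha.inactivePegs_inv]
  · exact hwindow
  · intro i hi x t ht1 htn hxi
    rw [rootPerm_inv ha.isHanoiWith.1, Equiv.Perm.inv_eq_iff_eq, hfix i hi x t ht1 htn hxi]

theorem finite_Runder : (Runder k n).Finite :=
  finite_setOf_isHanoiAut.subset fun _ => isHanoiAut_of_mem_Runder

theorem natCast_eq_natCast_fin_iff (a : ℕ) (x : Fin k) :
    (a : ZMod k) = ((x : ℕ) : ZMod k) ↔ a % k = x := by
  rw [ZMod.natCast_eq_natCast_iff', Nat.mod_eq_of_lt x.isLt]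

theorem rootPerm_apply_eq_self_of_mem_Runder {a : Equiv.Perm (Word k)} (ha : a ∈ Runder k n)
    {i x : Fin k} (hi : i ∈ inactivePegs a) {d : ℕ} (hd : d < n)
    (hxi : ((x : ℕ) : ZMod k) + d = (i : ℕ)) : rootPerm a x = x := by
  rcases ha with rfl | ⟨ha, -, hfix⟩
  · rw [rootPerm_one]; rfl
  have hmod : ((x : ℕ) + d) % k = i := (natCast_eq_natCast_fin_iff _ _).mp (by push_cast; exact hxi)
  rcases Nat.eq_zero_or_pos d with rfl | hd0
  · have hxi : x = i := Fin.ext (by rwa [Nat.add_zero, Nat.mod_eq_of_lt x.isLt] at hmod)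
    subst hxi
    exact ha.isHanoiWith.2.2.2 x hi
  · exact hfix i hi x d hd0 (by omega) hmod

theorem exists_offset_of_mem_Runder {a : Equiv.Perm (Word k)} (ha : a ∈ Runder k n) (ha1 : a ≠ 1)
    {q q' : Fin k} (hq : q ∈ inactivePegs a) (hq' : q' ∈ inactivePegs a) :
    ∃ d < n, ((q : ℕ) : ZMod k) + d = (q' : ℕ) ∨ ((q' : ℕ) : ZMod k) + d = (q : ℕ) := by
  obtain ⟨-, ⟨m, hwindow⟩, -⟩ := ha.resolve_left ha1
  have hcast : ∀ p ∈ inactivePegs a, ∃ t, 1 ≤ t ∧ t ≤ n ∧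
      ((p : ℕ) : ZMod k) = ((m : ℕ) : ZMod k) + t := fun p hp => by
    obtain ⟨t, ht1, htn, hp⟩ := hwindow p hp
    refine ⟨t, ht1, htn, ?_⟩
    rw [← Nat.cast_add, eq_comm, natCast_eq_natCast_fin_iff, hp]
  obtain ⟨t, ht1, htn, hqt⟩ := hcast q hq
  obtain ⟨t', ht1', htn', hqt'⟩ := hcast q' hq'
  rcases le_total t t' with htt | htt
  · refine ⟨t' - t, by omega, Or.inl ?_⟩
    rw [hqt, hqt', Nat.cast_sub htt]; ring
  · refine ⟨t - t', by omega, Or.inr ?_⟩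
    rw [hqt, hqt', Nat.cast_sub htt]; ring

theorem exists_inactivePegs_subset_fixT {T : Finset (Equiv.Perm (Word k))}
    (hT : ∀ t ∈ T, t ∈ Runder k n) {j : Fin k} (hj : ∀ t ∈ T, j ∈ inactivePegs t)
    (hne : ∃ t ∈ T, t ≠ 1) : ∃ s ∈ T, inactivePegs s ⊆ fixT T := by
  classical
  -- `s` is a non-identity generator whose inactive pegs reach least far beyond `j`.
  let reaches (t : Equiv.Perm (Word k)) (d : ℕ) : Prop :=
    ∃ q ∈ inactivePegs t, ((j : ℕ) : ZMod k) + d = (q : ℕ)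
  let reach (t : Equiv.Perm (Word k)) : ℕ := Nat.findGreatest (reaches t) (n - 1)
  obtain ⟨s, hs, hmin⟩ := (T.filter (· ≠ 1)).exists_min_image reach
    (by simpa [Finset.filter_nonempty_iff] using hne)
  obtain ⟨hsT, hs1⟩ := Finset.mem_filter.mp hs
  refine ⟨s, hsT, fun q hq t ht => ?_⟩
  obtain rfl | ht1 := eq_or_ne t 1
  · rw [rootPerm_one]; rfl
  obtain ⟨d, hd, hqj | hjq⟩ := exists_offset_of_mem_Runder (hT s hsT) hs1 hq (hj s hsT)
  · exact rootPerm_apply_eq_self_of_mem_Runder (hT t ht) (hj t ht) hd hqj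
  · have hds : d ≤ reach t :=
      (Nat.le_findGreatest (by omega) ⟨q, hq, hjq⟩).trans
        (hmin t (Finset.mem_filter.mpr ⟨ht, ht1⟩))
    obtain ⟨q', hq', hjq'⟩ : ∃ q' ∈ inactivePegs t, ((j : ℕ) : ZMod k) + reach t = (q' : ℕ) :=
      Nat.findGreatest_spec (P := reaches t) (Nat.zero_le _) ⟨j, hj t ht, by simp⟩
    refine rootPerm_apply_eq_self_of_mem_Runder (hT t ht) hq' (d := reach t - d)
      (by have : reach t ≤ n - 1 := Nat.findGreatest_le _; omega) ?_
    rw [← hjq', ← hjq, Nat.cast_sub hds]; ring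

end Runder

theorem mapsTo_compl_fixT {k : ℕ} {T : Finset (Equiv.Perm (Word k))} {t : Equiv.Perm (Word k)}
    (ht : t ∈ T) : Set.MapsTo (rootPerm t) (fixT T)ᶜ (fixT T)ᶜ := fun y hy hty => hy <| by
  rwa [← (rootPerm t).injective (hty t ht)]

theorem finite_closure_of_subset_Runder {k n : ℕ} {T : Finset (Equiv.Perm (Word k))}
    (hT : ∀ t ∈ T, t ∈ Runder k n) {j : Fin k} (hj : ∀ t ∈ T, j ∈ inactivePegs t) :
    (Submonoid.closure (T : Set (Equiv.Perm (Word k))) : Set (Equiv.Perm (Word k))).Finite := by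
  classical
  induction T using Finset.strongInduction with
  | H T ih =>
    have hH : ∀ t ∈ (T : Set (Equiv.Perm (Word k))), IsHanoiAut t :=
      fun t ht => isHanoiAut_of_mem_Runder (hT t ht)
    refine finite_closure_of_finite_sec hH fun x ⟨t, ht, hxt⟩ => ?_
    by_cases hxF : x ∈ fixT T
    · have hfin := ih (T.filter (x ∈ inactivePegs ·)) (Finset.filter_ssubset.mpr ⟨t, ht, hxt⟩)
        (fun u hu => hT u (Finset.mem_filter.mp hu).1)
        (fun u hu => hj u (Finset.mem_filter.mp hu).1)
      refine hfin.subset ?_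
      rintro _ ⟨g, hg, rfl⟩
      refine Submonoid.closure_mono ?_ (sec_mem_closure_of_mapsTo hH (A := {x})
        (fun u hu => Set.mapsTo_singleton.mpr (hxF u hu)) hg rfl)
      rintro u ⟨hu, y, rfl, hyu⟩
      exact Finset.mem_filter.mpr ⟨hu, hyu⟩
    · obtain ⟨u, hu, hxu⟩ : ∃ u ∈ T, rootPerm u x ≠ x := by simpa [fixT] using hxF
      obtain ⟨s, hs, hsF⟩ := exists_inactivePegs_subset_fixT hT hj
        ⟨u, hu, fun hu1 => hxu (by rw [hu1, rootPerm_one]; rfl)⟩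
      have hfin := ih (T.erase s) (Finset.erase_ssubset hs)
        (fun u hu => hT u (Finset.mem_of_mem_erase hu))
        (fun u hu => hj u (Finset.mem_of_mem_erase hu))
      refine hfin.subset ?_
      rintro _ ⟨g, hg, rfl⟩
      refine Submonoid.closure_mono ?_
        (sec_mem_closure_of_mapsTo hH (fun u hu => mapsTo_compl_fixT hu) hg hxF)
      rintro u ⟨hu, y, hyF, hyu⟩
      refine Finset.mem_erase.mpr ⟨?_, hu⟩
      rintro rfl
      exact hyF (hsF hyu)

theorem Runder_contracting_general {k n : ℕ} (S : Set (Equiv.Perm (Word k))) (hS : S ⊆ Runder k n) :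
    IsContracting (Subgroup.closure S) := by
  set T := S ∪ S⁻¹
  have hTR : T ⊆ Runder k n :=
    Set.union_subset hS fun s hs => inv_inv s ▸ inv_mem_Runder (hS (Set.mem_inv.mp hs))
  have hTfin : T.Finite := finite_Runder.subset hTR
  have hclosure : (Subgroup.closure S : Set (Equiv.Perm (Word k))) = Submonoid.closure T := by
    rw [← Subgroup.closure_toSubmonoid]; rfl
  refine ⟨⋃ j, Submonoid.closure {s ∈ T | j ∈ inactivePegs s}, ?_, ?_, fun g hg => ?_⟩
  · refine Set.finite_iUnion fun j => ?_
    obtain ⟨F, hF⟩ := (hTfin.subset (Set.sep_subset T (j ∈ inactivePegs ·))).exists_finset_coe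
    have hmem : ∀ t ∈ F, t ∈ T ∧ j ∈ inactivePegs t := fun t ht => by
      rwa [← Finset.mem_coe, hF] at ht
    rw [← hF]
    exact finite_closure_of_subset_Runder (fun t ht => hTR (hmem t ht).1)
      (fun t ht => (hmem t ht).2)
  · rw [hclosure]
    exact Set.iUnion_subset fun j => Submonoid.closure_mono (Set.sep_subset _ _)
  · rw [← SetLike.mem_coe, hclosure] at hg
    obtain ⟨L, hL, rfl⟩ := Submonoid.exists_list_of_mem_closure hg
    exact ⟨L.length + 1, fun v hv => secW_prod_mem_iUnion_closure
      (fun s hs => isHanoiAut_of_mem_Runder (hTR hs)) hL (by omega)⟩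

/-- Proposition: Hanoi groups generated by subsets of
`R̲_{k,n}` are contracting. -/
theorem Runder_contracting {k n : ℕ} (hn : 1 ≤ n) (hk : 2 * n + 1 ≤ k)
    (S : Set (Equiv.Perm (Word k))) (hS1 : (1 : Equiv.Perm (Word k)) ∈ S)
    (hS : S ⊆ Runder k n) :
    IsContracting (Subgroup.closure S) :=
  Runder_contracting_general S hS

end Hanoi
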